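/- arXiv:2007.03946 — 4 statements merged into one kernel-verified Lean document; each statement's English description precedes it below -/
import Mathlib

section
/- Let (X,d) be a finite metric space, r ≥ 0, S ⊆ X with pairwise distances strictly greater than 4r, and τ ∈ {0,…,k−1}. If there is a set C₁ ⊆ X with |C₁| ≤ k, satisfying for each ℓ ∈ [γ] the covering requirement |B(C₁,r) ∩ X_ℓ| ≥ m_ℓ, and with |C₁ ∩ B(S,r)| > τ, then there exists a set C₂ ⊆ X with |C₂| ≤ k satisfying |B(C₂,2r) ∩ X_ℓ| ≥ m_ℓ for each ℓ ∈ [γ] and |C₂ \ S| ≤ k − τ − 1. -/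
/-!
Move every center of `C₁` that lies within `r` of `S` onto such a point of `S`, and leave the
other centers in place. No center moves by more than `r`, so every point covered at radius `r`
stays covered at radius `2r`, and the number of centers does not grow. A moved center lands in
`S`, so the new centers outside `S` come from the centers of `C₁` far from `S`; as more than `τ`
of the at most `k` centers are near `S`, there are at most `k - τ - 1` of those.
-/

open scoped Classical

open Finset

section Snap

variable {X : Type*} [PseudoMetricSpace X] (S : Finset X) (r : ℝ)

noncomputable def snap (c : X) : X :=
  if h : ∃ s ∈ S, dist s c ≤ r then h.choose else c

variable {S r}

theorem snap_mem {c : X} (h : ∃ s ∈ S, dist s c ≤ r) : snap S r c ∈ S := by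
  rw [snap, dif_pos h]
  exact h.choose_spec.1

theorem snap_eq_self {c : X} (h : ¬∃ s ∈ S, dist s c ≤ r) : snap S r c = c := by
  rw [snap, dif_neg h]

theorem dist_snap_le (hr : 0 ≤ r) (c : X) : dist (snap S r c) c ≤ r := by
  by_cases h : ∃ s ∈ S, dist s c ≤ r
  · rw [snap, dif_pos h]
    exact h.choose_spec.2
  · rw [snap_eq_self h, dist_self]
    exact hr

theorem card_image_snap_sdiff_le (C : Finset X) :
    (C.image (snap S r) \ S).card ≤ (C.filter fun c => ¬∃ s ∈ S, dist s c ≤ r).card := by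
  refine card_le_card fun x hx => ?_
  obtain ⟨hx, hxS⟩ := mem_sdiff.mp hx
  obtain ⟨c, hc, rfl⟩ := mem_image.mp hx
  have hfar : ¬∃ s ∈ S, dist s c ≤ r := fun h => hxS (snap_mem h)
  rw [snap_eq_self hfar]
  exact mem_filter.mpr ⟨hc, hfar⟩

end Snap

theorem exists_mem_image_dist_le_add {X : Type*} [PseudoMetricSpace X]
    {f : X → X} {δ r : ℝ} (hf : ∀ c, dist (f c) c ≤ δ) {C : Finset X} {u : X}
    (hu : ∃ c ∈ C, dist c u ≤ r) : ∃ c ∈ C.image f, dist c u ≤ δ + r := by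
  obtain ⟨c, hc, hcu⟩ := hu
  exact ⟨f c, mem_image_of_mem f hc, (dist_triangle _ c _).trans (add_le_add (hf c) hcu)⟩

theorem stmt_3_general {X : Type*} [MetricSpace X] (r : ℝ) (hr : 0 ≤ r)
    (γ k τ : ℕ)
    (Xc : Fin γ → Finset X) (m : Fin γ → ℕ)
    (S : Finset X)
    (C₁ : Finset X) (hC₁k : C₁.card ≤ k)
    (hC₁cov : ∀ ℓ : Fin γ,
      m ℓ ≤ ((Xc ℓ).filter (fun u => ∃ c ∈ C₁, dist c u ≤ r)).card)
    (hC₁S : τ < (C₁.filter (fun c => ∃ s ∈ S, dist s c ≤ r)).card) :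
    ∃ C₂ : Finset X, C₂.card ≤ k ∧
      (∀ ℓ : Fin γ,
        m ℓ ≤ ((Xc ℓ).filter (fun u => ∃ c ∈ C₂, dist c u ≤ 2 * r)).card) ∧
      (C₂ \ S).card ≤ k - τ - 1 := by
  refine ⟨C₁.image (snap S r), card_image_le.trans hC₁k, fun ℓ => (hC₁cov ℓ).trans ?_, ?_⟩
  · refine card_le_card (monotone_filter_right _ fun u _ hu => ?_)
    rw [two_mul]
    exact exists_mem_image_dist_le_add (dist_snap_le hr) hu
  · have hfar := card_image_snap_sdiff_le (S := S) (r := r) C₁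
    have hsplit := card_filter_add_card_filter_not (s := C₁) (p := fun c => ∃ s ∈ S, dist s c ≤ r)
    omega

theorem stmt_3 {X : Type*} [MetricSpace X] [Fintype X] (r : ℝ) (hr : 0 ≤ r)
    (γ k τ : ℕ) (hτ : τ < k)
    (Xc : Fin γ → Finset X) (m : Fin γ → ℕ)
    (S : Finset X)
    (hS : ∀ s ∈ S, ∀ s' ∈ S, s ≠ s' → dist s s' > 4 * r)
    (C₁ : Finset X) (hC₁k : C₁.card ≤ k)
    (hC₁cov : ∀ ℓ : Fin γ,
      m ℓ ≤ ((Xc ℓ).filter (fun u => ∃ c ∈ C₁, dist c u ≤ r)).card)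
    (hC₁S : τ < (C₁.filter (fun c => ∃ s ∈ S, dist s c ≤ r)).card) :
    ∃ C₂ : Finset X, C₂.card ≤ k ∧
      (∀ ℓ : Fin γ,
        m ℓ ≤ ((Xc ℓ).filter (fun u => ∃ c ∈ C₂, dist c u ≤ 2 * r)).card) ∧
      (C₂ \ S).card ≤ k - τ - 1 :=
  stmt_3_general r hr γ k τ Xc m S C₁ hC₁k hC₁cov hC₁S
end

section
/- Let (X,d) be a finite metric space, S ⊆ X with pairwise distances strictly greater than 4r, and let C₁ ⊆ X with |C₁| ≤ k. Define A = C₁ ∩ B(S,r), and for each p ∈ A let φ(p) be the unique point of S with p ∈ B(φ(p),r). Then C₂ := φ(A) ∪ (C₁ \ A) satisfies |C₂| ≤ k and B(C₁,r) ⊆ B(C₂,2r). -/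
open scoped Classical

namespace Finset

variable {α : Type*} [DecidableEq α]

theorem card_image_union_sdiff_le {A C : Finset α} (hAC : A ⊆ C) (f : α → α) :
    #(A.image f ∪ (C \ A)) ≤ #C :=
  calc #(A.image f ∪ (C \ A)) ≤ #(A.image f) + #(C \ A) := card_union_le _ _
    _ ≤ #A + #(C \ A) := Nat.add_le_add_right card_image_le _
    _ = #C := by rw [add_comm, card_sdiff_add_card_eq_card hAC]

end Finset

theorem exists_mem_image_union_sdiff_dist_le {X : Type*} [PseudoMetricSpace X] [DecidableEq X]
    {r : ℝ} {A C : Finset X} {f : X → X} (hf : ∀ p ∈ A, dist p (f p) ≤ r)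
    {c u : X} (hc : c ∈ C) (hcu : dist c u ≤ r) :
    ∃ c' ∈ A.image f ∪ (C \ A), dist c' u ≤ 2 * r := by
  by_cases hcA : c ∈ A
  · refine ⟨f c, Finset.mem_union_left _ (Finset.mem_image_of_mem _ hcA), ?_⟩
    calc dist (f c) u ≤ dist c (f c) + dist c u := dist_triangle_left _ _ _
      _ ≤ 2 * r := by linarith [hf c hcA]
  · have hr : 0 ≤ r := dist_nonneg.trans hcu
    exact ⟨c, Finset.mem_union_right _ (Finset.mem_sdiff.mpr ⟨hc, hcA⟩), by linarith⟩

theorem stmt_4_general {X : Type*} [MetricSpace X] (r : ℝ)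
    (k : ℕ) (S : Finset X)
    (C₁ : Finset X) (hC₁k : C₁.card ≤ k)
    (A : Finset X) (hA : A = C₁.filter (fun c => ∃ s ∈ S, dist s c ≤ r))
    (φ : X → X)
    (hφ : ∀ p ∈ A, φ p ∈ S ∧ dist p (φ p) ≤ r) :
    (A.image φ ∪ (C₁ \ A)).card ≤ k ∧
    ∀ u : X, (∃ c ∈ C₁, dist c u ≤ r) →
      ∃ c ∈ A.image φ ∪ (C₁ \ A), dist c u ≤ 2 * r := by
  have hAC : A ⊆ C₁ := hA ▸ Finset.filter_subset _ _
  refine ⟨(Finset.card_image_union_sdiff_le hAC φ).trans hC₁k, ?_⟩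
  rintro u ⟨c, hc, hcu⟩
  exact exists_mem_image_union_sdiff_dist_le (fun p hp => (hφ p hp).2) hc hcu

theorem stmt_4 {X : Type*} [MetricSpace X] [Fintype X] (r : ℝ) (hr : 0 ≤ r)
    (k : ℕ) (S : Finset X)
    (hS : ∀ s ∈ S, ∀ s' ∈ S, s ≠ s' → dist s s' > 4 * r)
    (C₁ : Finset X) (hC₁k : C₁.card ≤ k)
    (A : Finset X) (hA : A = C₁.filter (fun c => ∃ s ∈ S, dist s c ≤ r))
    (φ : X → X)
    (hφ : ∀ p ∈ A, φ p ∈ S ∧ dist p (φ p) ≤ r) :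
    (A.image φ ∪ (C₁ \ A)).card ≤ k ∧
    ∀ u : X, (∃ c ∈ C₁, dist c u ≤ r) →
      ∃ c ∈ A.image φ ∪ (C₁ \ A), dist c u ≤ 2 * r :=
  stmt_4_general r k S C₁ hC₁k A hA φ hφ
end

section
/- Let (X,d) be a finite metric space, r ≥ 0, and suppose the polytope T = {(x,y) ∈ [0,1]^X × [0,1]^X : Σ_v y(v) ≤ k, Σ_{v∈B(u,r)} y(v) ≥ x(u) for all u, Σ_u a_ℓ(u)x(u) ≥ b_ℓ for all ℓ ∈ [t]} is nonempty, where a_ℓ ∈ ℝ≥0^X, b_ℓ ≥ 0. Let (x,y) ∈ T, let (S,𝒟) be the greedy partition for (x,y) with centers S = {s₁,…,s_q} and clusters D₁,…,D_q, and suppose y(B(S,r)) ≤ k − t + 1. Then there exists C ⊆ X with |C| ≤ k and a_ℓ(B(C,4r)) ≥ b_ℓ for every ℓ ∈ [t]. -/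
/-!
Put `z i = min 1 (y (B(s i, r)))`. Since `x u ≤ z i` on `D i`, `z` is a fractional solution of the
cluster LP `∑ i, a_ℓ(D i) z i ≥ b_ℓ`, `0 ≤ z ≤ 1`, and since the balls `B(s i, r)` are disjoint,
`∑ i, z i ≤ y(B(S, r)) ≤ k - t + 1`. The LP has only `t` covering rows, so as long as more than `t`
coordinates of `z` are fractional their columns are linearly dependent, and moving along a kernel
direction that does not increase `∑ z` makes one more coordinate integral. When at most `t`
coordinates are fractional, the set `I` of indices with `z i ≠ 0` has `|I| < ∑ z + t ≤ k + 1`,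
`∑ i ∈ I, a_ℓ(D i) ≥ b_ℓ`, and the centres `s i`, `i ∈ I`, cover these `D i` within distance `4r`.
-/

open scoped Classical

open Finset Matrix Function

noncomputable def maxStep (z e : ℝ) : ℝ := (if 0 < e then 1 - z else z) / |e|

lemma maxStep_pos {z e : ℝ} (hz : z ∈ Set.Ioo 0 1) (he : e ≠ 0) : 0 < maxStep z e := by
  obtain ⟨hz0, hz1⟩ := hz
  unfold maxStep
  split_ifs <;> exact div_pos (by linarith) (abs_pos.mpr he)

lemma add_mul_mem_Icc_of_le_maxStep {z e ε : ℝ} (hz : z ∈ Set.Icc 0 1) (hε : 0 ≤ ε)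
    (h : ε ≤ maxStep z e) : z + ε * e ∈ Set.Icc 0 1 := by
  obtain ⟨hz0, hz1⟩ := hz
  unfold maxStep at h
  rcases lt_trichotomy e 0 with he | rfl | he
  · rw [if_neg he.not_gt, abs_of_neg he, le_div_iff₀ (neg_pos.mpr he)] at h
    constructor <;> nlinarith
  · simpa using ⟨hz0, hz1⟩
  · rw [if_pos he, abs_of_pos he, le_div_iff₀ he] at h
    constructor <;> nlinarith

lemma add_maxStep_mul_eq_zero_or_one (z : ℝ) {e : ℝ} (he : e ≠ 0) :
    z + maxStep z e * e = 0 ∨ z + maxStep z e * e = 1 := by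
  unfold maxStep
  rcases he.lt_or_gt with he | he
  · left
    rw [if_neg he.not_gt, abs_of_neg he]
    field_simp
    ring
  · right
    rw [if_pos he, abs_of_pos he]
    field_simp
    ring

section FractionalRounding

variable {ι κ : Type*} [Fintype ι] [Fintype κ]

theorem Matrix.exists_ne_zero_mulVec_eq_zero_sum_nonpos (A : Matrix κ ι ℝ) (F : Finset ι)
    (hF : Fintype.card κ < #F) :
    ∃ e : ι → ℝ, e ≠ 0 ∧ A *ᵥ e = 0 ∧ (∀ i ∉ F, e i = 0) ∧ ∑ i, e i ≤ 0 := by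
  let extend := ExtendByZero.linearMap ℝ ((↑) : F → ι)
  have hker : LinearMap.ker (A.mulVecLin ∘ₗ extend) ≠ ⊥ :=
    LinearMap.ker_ne_bot_of_finrank_lt (by simpa using hF)
  obtain ⟨g, hg, hg0⟩ := (Submodule.ne_bot_iff _).mp hker
  have hsupp : ∀ i ∉ F, extend g i = 0 := fun i hi =>
    extend_apply' _ _ _ (by rintro ⟨j, rfl⟩; exact hi j.2)
  have hne : extend g ≠ 0 := by
    obtain ⟨j, hj⟩ := ne_iff.mp hg0
    exact ne_iff.mpr ⟨j, by simpa [extend, Subtype.val_injective.extend_apply] using hj⟩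
  rcases le_or_gt (∑ i, extend g i) 0 with hsum | hsum
  · exact ⟨extend g, hne, hg, hsupp, hsum⟩
  · refine ⟨-extend g, neg_ne_zero.mpr hne, ?_, fun i hi => by simp [hsupp i hi], ?_⟩
    · simpa [mulVec_neg] using hg
    · simpa using hsum.le

noncomputable def fractionalSupport (z : ι → ℝ) : Finset ι := {i | z i ≠ 0 ∧ z i ≠ 1}

lemma mem_fractionalSupport {z : ι → ℝ} {i : ι} :
    i ∈ fractionalSupport z ↔ z i ≠ 0 ∧ z i ≠ 1 := by
  simp [fractionalSupport]

lemma exists_pos_fractionalSupport_add_smul_ssubset {z e : ι → ℝ}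
    (hz : ∀ i, z i ∈ Set.Icc 0 1) (he : e ≠ 0) (hsupp : ∀ i ∉ fractionalSupport z, e i = 0) :
    ∃ ε > 0, (∀ i, z i + ε * e i ∈ Set.Icc 0 1) ∧
      fractionalSupport (z + ε • e) ⊂ fractionalSupport z := by
  have hfrac : ∀ i, e i ≠ 0 → i ∈ fractionalSupport z := fun i hi =>
    by_contra fun h => hi (hsupp i h)
  have hIoo : ∀ i, e i ≠ 0 → z i ∈ Set.Ioo 0 1 := fun i hi => by
    obtain ⟨h0, h1⟩ := mem_fractionalSupport.mp (hfrac i hi)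
    exact ⟨(hz i).1.lt_of_ne' h0, (hz i).2.lt_of_ne h1⟩
  obtain ⟨j, hj, hmin⟩ := Finset.exists_min_image {i | e i ≠ 0} (fun i => maxStep (z i) (e i))
    (by simpa [Finset.Nonempty, ne_iff] using he)
  simp only [Finset.mem_filter, Finset.mem_univ, true_and] at hj hmin
  set ε := maxStep (z j) (e j)
  have hε : 0 < ε := maxStep_pos (hIoo j hj) hj
  refine ⟨ε, hε, fun i => ?_, ?_⟩
  · by_cases hi : e i = 0
    · simpa [hi] using hz i
    · exact add_mul_mem_Icc_of_le_maxStep (hz i) hε.le (hmin i hi)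
  refine Finset.ssubset_of_subset_of_ssubset (fun i hi => ?_) (Finset.erase_ssubset (hfrac j hj))
  rw [mem_fractionalSupport, Pi.add_apply, Pi.smul_apply, smul_eq_mul] at hi
  refine Finset.mem_erase.mpr ⟨?_, ?_⟩
  · rintro rfl
    rcases add_maxStep_mul_eq_zero_or_one (z i) hj with h | h
    exacts [hi.1 h, hi.2 h]
  · by_cases hei : e i = 0
    · simpa [mem_fractionalSupport, hei] using hi
    · exact hfrac i hei

lemma exists_card_fractionalSupport_le (A : Matrix κ ι ℝ) (b : κ → ℝ) (K : ℝ) (z : ι → ℝ)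
    (hz : ∀ i, z i ∈ Set.Icc 0 1) (hAz : b ≤ A *ᵥ z) (hzK : ∑ i, z i ≤ K) :
    ∃ z' : ι → ℝ, (∀ i, z' i ∈ Set.Icc 0 1) ∧ b ≤ A *ᵥ z' ∧ ∑ i, z' i ≤ K ∧
      #(fractionalSupport z') ≤ Fintype.card κ := by
  induction hn : #(fractionalSupport z) using Nat.strong_induction_on generalizing z with
  | _ n ih =>
  by_cases hsmall : n ≤ Fintype.card κ
  · exact ⟨z, hz, hAz, hzK, hn ▸ hsmall⟩
  obtain ⟨e, he, hAe, hsupp, hsum⟩ :=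
    A.exists_ne_zero_mulVec_eq_zero_sum_nonpos (fractionalSupport z) (by omega)
  obtain ⟨ε, hε, hbox, hss⟩ := exists_pos_fractionalSupport_add_smul_ssubset hz he hsupp
  refine ih _ (hn ▸ Finset.card_lt_card hss) (z + ε • e) hbox ?_ ?_ rfl
  · rwa [mulVec_add, mulVec_smul, hAe, smul_zero, add_zero]
  · calc ∑ i, (z + ε • e) i = ∑ i, z i + ε * ∑ i, e i := by
          simp [Finset.sum_add_distrib, Finset.mul_sum]
      _ ≤ K := by nlinarith

lemma exists_finset_card_lt_of_card_fractionalSupport_le [Nonempty κ] (A : Matrix κ ι ℝ)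
    (hA : ∀ ℓ i, 0 ≤ A ℓ i) (b : κ → ℝ) (K : ℝ) (z : ι → ℝ)
    (hz : ∀ i, z i ∈ Set.Icc 0 1) (hAz : b ≤ A *ᵥ z) (hzK : ∑ i, z i ≤ K)
    (hfrac : #(fractionalSupport z) ≤ Fintype.card κ) :
    ∃ S : Finset ι, (#S : ℝ) < K + Fintype.card κ ∧ ∀ ℓ, b ℓ ≤ ∑ i ∈ S, A ℓ i := by
  set S : Finset ι := {i | z i ≠ 0}
  have hFS : fractionalSupport z ⊆ S := fun i hi => by
    simpa [S] using (mem_fractionalSupport.mp hi).1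
  refine ⟨S, ?_, fun ℓ => ?_⟩
  · have hslack : ∑ i ∈ fractionalSupport z, (1 - z i) < Fintype.card κ := by
      rcases (fractionalSupport z).eq_empty_or_nonempty with hF | hF
      · simpa [hF] using Fintype.card_pos
      · refine lt_of_lt_of_le ?_ (Nat.cast_le.mpr hfrac)
        rw [Finset.cast_card]
        refine Finset.sum_lt_sum_of_nonempty hF fun i hi => ?_
        have := (hz i).1.lt_of_ne' (mem_fractionalSupport.mp hi).1
        linarith
    calc (#S : ℝ) = ∑ i ∈ S, z i + ∑ i ∈ S, (1 - z i) := by simp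
      _ = ∑ i ∈ S, z i + ∑ i ∈ fractionalSupport z, (1 - z i) := by
          congr 1
          refine (Finset.sum_subset hFS fun i hiS hiF => ?_).symm
          simp only [S, mem_fractionalSupport, Finset.mem_filter] at hiS hiF
          simp [not_and_not_right.mp hiF hiS.2]
      _ < K + Fintype.card κ := by
          have := Finset.sum_le_sum_of_subset_of_nonneg (Finset.subset_univ S)
            fun i _ _ => (hz i).1
          linarith
  · calc b ℓ ≤ ∑ i, A ℓ i * z i := hAz ℓ
      _ = ∑ i ∈ S, A ℓ i * z i :=
          (Finset.sum_subset (Finset.subset_univ S) fun i _ hi => by simp_all [S]).symm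
      _ ≤ ∑ i ∈ S, A ℓ i :=
          Finset.sum_le_sum fun i _ => mul_le_of_le_one_right (hA ℓ i) (hz i).2

theorem exists_finset_card_lt_of_le_mulVec [Nonempty κ] (A : Matrix κ ι ℝ)
    (hA : ∀ ℓ i, 0 ≤ A ℓ i) (b : κ → ℝ) (K : ℝ) (z : ι → ℝ)
    (hz : ∀ i, z i ∈ Set.Icc 0 1) (hAz : b ≤ A *ᵥ z) (hzK : ∑ i, z i ≤ K) :
    ∃ S : Finset ι, (#S : ℝ) < K + Fintype.card κ ∧ ∀ ℓ, b ℓ ≤ ∑ i ∈ S, A ℓ i := by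
  obtain ⟨z', hz', hAz', hzK', hfrac⟩ := exists_card_fractionalSupport_le A b K z hz hAz hzK
  exact exists_finset_card_lt_of_card_fractionalSupport_le A hA b K z' hz' hAz' hzK' hfrac

end FractionalRounding

section Clusters

variable {ι X : Type*} {D : ι → Finset X}

lemma pairwise_disjoint_of_existsUnique_mem (hD : ∀ u, ∃! i, u ∈ D i) :
    Pairwise (Disjoint on D) := fun _ _ hij =>
  Finset.disjoint_left.mpr fun u hui huj => hij ((hD u).unique hui huj)

lemma sum_eq_sum_sum_of_existsUnique_mem [Fintype ι] [Fintype X] (hD : ∀ u, ∃! i, u ∈ D i)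
    (g : X → ℝ) :
    ∑ u, g u = ∑ i, ∑ u ∈ D i, g u := by
  rw [← Finset.sum_biUnion ((pairwise_disjoint_of_existsUnique_mem hD).set_pairwise _)]
  congr
  exact (Finset.eq_univ_of_forall fun u => by simpa using (hD u).exists).symm

lemma sum_mul_le_sum_sum_mul [Fintype ι] [Fintype X] (hD : ∀ u, ∃! i, u ∈ D i) {a x : X → ℝ}
    (w : ι → ℝ) (ha : ∀ u, 0 ≤ a u) (hxw : ∀ i, ∀ u ∈ D i, x u ≤ w i) :
    ∑ u, a u * x u ≤ ∑ i, (∑ u ∈ D i, a u) * w i := by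
  rw [sum_eq_sum_sum_of_existsUnique_mem hD]
  refine Finset.sum_le_sum fun i _ => ?_
  rw [Finset.sum_mul]
  exact Finset.sum_le_sum fun u hu => mul_le_mul_of_nonneg_left (hxw i u hu) (ha u)

lemma sum_sum_filter_dist_le_eq [Fintype ι] [MetricSpace X] [Fintype X] (s : ι → X) {r : ℝ}
    (hs : ∀ i j, i ≠ j → 2 * r < dist (s i) (s j)) (y : X → ℝ) :
    ∑ i, ∑ v ∈ {v | dist (s i) v ≤ r}, y v = ∑ v ∈ {v | ∃ i, dist (s i) v ≤ r}, y v := by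
  have hdisj : Pairwise (Disjoint on fun i => ({v | dist (s i) v ≤ r} : Finset X)) :=
    fun i j hij => Finset.disjoint_left.mpr fun v hvi hvj => by
      simp only [Finset.mem_filter, Finset.mem_univ, true_and] at hvi hvj
      linarith [hs i j hij, dist_triangle_right (s i) (s j) v]
  rw [← Finset.sum_biUnion (hdisj.set_pairwise _)]
  congr
  ext v
  simp

lemma sum_sum_le_sum_filter_exists_dist_le [MetricSpace X] [Fintype X]
    (hD : ∀ u, ∃! i, u ∈ D i) (s : ι → X) {R : ℝ} (hR : ∀ i, ∀ u ∈ D i, dist (s i) u ≤ R)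
    {a : X → ℝ} (ha : ∀ u, 0 ≤ a u) (S : Finset ι) :
    ∑ i ∈ S, ∑ u ∈ D i, a u ≤ ∑ u ∈ {u | ∃ c ∈ S.image s, dist c u ≤ R}, a u := by
  rw [← Finset.sum_biUnion ((pairwise_disjoint_of_existsUnique_mem hD).set_pairwise _)]
  refine Finset.sum_le_sum_of_subset_of_nonneg (fun u hu => ?_) fun u _ _ => ha u
  obtain ⟨i, hiS, hui⟩ := Finset.mem_biUnion.mp hu
  simpa using ⟨i, hiS, hR i u hui⟩

end Clusters

theorem stmt_10_general {X : Type*} [MetricSpace X] [Fintype X]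
    (r : ℝ) (hr : 0 ≤ r) (k t q : ℕ)
    (a : Fin t → X → ℝ) (ha : ∀ ℓ u, 0 ≤ a ℓ u)
    (b : Fin t → ℝ)
    (x y : X → ℝ)
    (hx01 : ∀ u, 0 ≤ x u ∧ x u ≤ 1) (hy01 : ∀ u, 0 ≤ y u ∧ y u ≤ 1)
    (hcov : ∀ ℓ : Fin t, b ℓ ≤ ∑ u : X, a ℓ u * x u)
    (s : Fin q → X) (D : Fin q → Finset X)
    (hsep : ∀ i j : Fin q, i ≠ j → dist (s i) (s j) > 4 * r)
    (hpart : ∀ u : X, ∃! i : Fin q, u ∈ D i)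
    (hD : ∀ i, ∀ u ∈ D i, dist (s i) u ≤ 4 * r)
    (hgood : ∀ i, ∀ u ∈ D i,
      x u ≤ ∑ v ∈ Finset.univ.filter (fun v => dist (s i) v ≤ r), y v)
    (hsmall : ∑ v ∈ Finset.univ.filter (fun v => ∃ i : Fin q, dist (s i) v ≤ r), y v
      ≤ (k : ℝ) - t + 1) :
    ∃ C : Finset X, C.card ≤ k ∧
      ∀ ℓ : Fin t,
        b ℓ ≤ ∑ u ∈ Finset.univ.filter (fun u => ∃ c ∈ C, dist c u ≤ 4 * r), a ℓ u := by
  rcases t.eq_zero_or_pos with rfl | ht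
  · exact ⟨∅, by simp, fun ℓ => ℓ.elim0⟩
  have : Nonempty (Fin t) := Fin.pos_iff_nonempty.mp ht
  let A : Matrix (Fin t) (Fin q) ℝ := fun ℓ i => ∑ u ∈ D i, a ℓ u
  let z : Fin q → ℝ := fun i => min 1 (∑ v ∈ {v | dist (s i) v ≤ r}, y v)
  have hz : ∀ i, z i ∈ Set.Icc 0 1 := fun i =>
    ⟨le_min zero_le_one (Finset.sum_nonneg fun v _ => (hy01 v).1), min_le_left _ _⟩
  have hAz : b ≤ A *ᵥ z := fun ℓ => (hcov ℓ).trans <|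
    sum_mul_le_sum_sum_mul hpart z (ha ℓ) fun i u hu => le_min (hx01 u).2 (hgood i u hu)
  have hzK : ∑ i, z i ≤ k - t + 1 := calc
    ∑ i, z i ≤ ∑ i, ∑ v ∈ {v | dist (s i) v ≤ r}, y v :=
      Finset.sum_le_sum fun i _ => min_le_right _ _
    _ = _ := sum_sum_filter_dist_le_eq s (fun i j hij => by linarith [hsep i j hij]) y
    -- `hsmall` decides `∃ i : Fin q` by `Nat.decidableExistsFin`, not the generic instance
    _ ≤ _ := by convert hsmall
  obtain ⟨S, hS, hcover⟩ := exists_finset_card_lt_of_le_mulVec A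
    (fun ℓ i => Finset.sum_nonneg fun u _ => ha ℓ u) b _ z hz hAz hzK
  refine ⟨S.image s, ?_, fun ℓ => (hcover ℓ).trans
    (sum_sum_le_sum_filter_exists_dist_le hpart s hD (ha ℓ) S)⟩
  rw [Fintype.card_fin] at hS
  have hSk : #S < k + 1 := by exact_mod_cast (show (#S : ℝ) < k + 1 by linarith)
  exact Finset.card_image_le.trans (by omega)

theorem stmt_10 {X : Type*} [MetricSpace X] [Fintype X]
    (r : ℝ) (hr : 0 ≤ r) (k t q : ℕ)
    (a : Fin t → X → ℝ) (ha : ∀ ℓ u, 0 ≤ a ℓ u)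
    (b : Fin t → ℝ) (hb : ∀ ℓ, 0 ≤ b ℓ)
    (x y : X → ℝ)
    (hx01 : ∀ u, 0 ≤ x u ∧ x u ≤ 1) (hy01 : ∀ u, 0 ≤ y u ∧ y u ≤ 1)
    (hyk : ∑ v : X, y v ≤ (k : ℝ))
    (hball : ∀ u : X, x u ≤ ∑ v ∈ Finset.univ.filter (fun v => dist u v ≤ r), y v)
    (hcov : ∀ ℓ : Fin t, b ℓ ≤ ∑ u : X, a ℓ u * x u)
    (s : Fin q → X) (D : Fin q → Finset X)
    (hsep : ∀ i j : Fin q, i ≠ j → dist (s i) (s j) > 4 * r)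
    (hpart : ∀ u : X, ∃! i : Fin q, u ∈ D i)
    (hsD : ∀ i, s i ∈ D i)
    (hD : ∀ i, ∀ u ∈ D i, dist (s i) u ≤ 4 * r)
    (hgood : ∀ i, ∀ u ∈ D i,
      x u ≤ ∑ v ∈ Finset.univ.filter (fun v => dist (s i) v ≤ r), y v)
    (hsmall : ∑ v ∈ Finset.univ.filter (fun v => ∃ i : Fin q, dist (s i) v ≤ r), y v
      ≤ (k : ℝ) - t + 1) :
    ∃ C : Finset X, C.card ≤ k ∧
      ∀ ℓ : Fin t,
        b ℓ ≤ ∑ u ∈ Finset.univ.filter (fun u => ∃ c ∈ C, dist c u ≤ 4 * r), a ℓ u :=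
  stmt_10_general r hr k t q a ha b x y hx01 hy01 hcov s D hsep hpart hD hgood hsmall
end

section
/- Let G = (V,E) be a graph and t ∈ ℕ. Construct a γ-Colorful k-Center instance on the real line with X = {1,…,|V|} ⊆ ℝ, γ = |E| colors where the edge e_ℓ = {u_i, u_j} defines color class X_ℓ = {i, j} with requirement m_ℓ = 1, and k = t. Then this instance has a solution of radius 0 if and only if G has a vertex cover of size at most t. -/
open Finset

namespace SimpleGraph

variable {V β : Type*} (G : SimpleGraph V)

theorem exists_subset_image_hits_edges_iff [Fintype V] [DecidableEq β] {f : V → β}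
    (hf : Function.Injective f) (t : ℕ) :
    (∃ C : Finset β, C ⊆ univ.image f ∧ #C ≤ t ∧ ∀ i j, G.Adj i j → f i ∈ C ∨ f j ∈ C) ↔
      ∃ S : Finset V, #S ≤ t ∧ G.IsVertexCover S := by
  constructor
  · rintro ⟨C, -, hCt, hC⟩
    refine ⟨C.preimage f hf.injOn, ?_, fun i j hij => by simpa using hC i j hij⟩
    calc #(C.preimage f hf.injOn) ≤ #C :=
          card_le_card_of_injOn f (fun _ hv => mem_preimage.mp hv) hf.injOn
      _ ≤ t := hCt
  · rintro ⟨S, hSt, hS⟩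
    refine ⟨S.image f, image_subset_image (subset_univ S), card_image_le.trans hSt,
      fun i j hij => ?_⟩
    rcases hS hij with hi | hj
    · exact Or.inl (mem_image_of_mem f hi)
    · exact Or.inr (mem_image_of_mem f hj)

end SimpleGraph

theorem Finset.exists_mem_dist_le_zero_or_iff {X : Type*} [MetricSpace X] (C : Finset X)
    (x y : X) : (∃ c ∈ C, dist c x ≤ 0 ∨ dist c y ≤ 0) ↔ x ∈ C ∨ y ∈ C := by
  simp only [dist_le_zero]
  grind

theorem stmt_16_general (n t : ℕ) (G : SimpleGraph (Fin n)) :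
    (∃ C : Finset ℝ,
        C ⊆ Finset.image (fun i : Fin n => ((i : ℕ) : ℝ) + 1) Finset.univ ∧
        C.card ≤ t ∧
        ∀ i j : Fin n, G.Adj i j →
          ∃ c ∈ C, dist c (((i : ℕ) : ℝ) + 1) ≤ 0 ∨ dist c (((j : ℕ) : ℝ) + 1) ≤ 0)
      ↔
    ∃ S : Finset (Fin n), S.card ≤ t ∧
      ∀ i j : Fin n, G.Adj i j → i ∈ S ∨ j ∈ S := by
  have hf : Function.Injective (fun i : Fin n => ((i : ℕ) : ℝ) + 1) := fun a b hab =>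
    Fin.ext (by simpa using hab)
  simp only [Finset.exists_mem_dist_le_zero_or_iff]
  exact G.exists_subset_image_hits_edges_iff hf t

theorem stmt_16 (n t : ℕ) (G : SimpleGraph (Fin n)) [DecidableEq (Fin n)] :
    (∃ C : Finset ℝ,
        C ⊆ Finset.image (fun i : Fin n => ((i : ℕ) : ℝ) + 1) Finset.univ ∧
        C.card ≤ t ∧
        ∀ i j : Fin n, G.Adj i j →
          ∃ c ∈ C, dist c (((i : ℕ) : ℝ) + 1) ≤ 0 ∨ dist c (((j : ℕ) : ℝ) + 1) ≤ 0)
      ↔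
    ∃ S : Finset (Fin n), S.card ≤ t ∧
      ∀ i j : Fin n, G.Adj i j → i ∈ S ∨ j ∈ S :=
  stmt_16_general n t G
end
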